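/- Let n ≥ 1, let N be a Hermitian positive definite n×n complex matrix, let N¹, N², N³ be Hermitian n×n complex matrices, and let I₀ be a Hermitian positive semidefinite n×n complex matrix. Assume Condition (3): for every μ ∈ ℂ and every n̂ ∈ ℝ³ with |n̂| = 1, the only vector ψ ∈ ℂⁿ satisfying I₀ψ = 0 and (μN + i·N(n̂))ψ = 0 is ψ = 0. Define, for k ∈ ℤ³, the matrix A(k) = N⁻¹·(i·N(k) − I₀). Then there exists δ > 0 such that: (a) for every k ∈ ℤ³ with k ≠ 0, every eigenvalue λ of A(k) satisfies Re λ ≤ −δ; and (b) every eigenvalue λ of A(0) = −N⁻¹I₀ is either equal to 0 or is real with λ ≤ −δ. -/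

import Mathlib

open Matrix
open scoped ComplexOrder

/-- `N(k)` for an integer covector `k`. -/
noncomputable def symbolZ {n : ℕ} (N1 N2 N3 : Matrix (Fin n) (Fin n) ℂ)
    (k : Fin 3 → ℤ) : Matrix (Fin n) (Fin n) ℂ :=
  (k 0 : ℂ) • N1 + (k 1 : ℂ) • N2 + (k 2 : ℂ) • N3

/-!
Testing the pencil equation `(i N(k) - I₀) φ = λ N φ` against `φ` gives
`Re λ · φ⋆Nφ = -φ⋆I₀φ` and `Im λ · φ⋆Nφ = φ⋆N(k)φ`, all three forms being real. At `k = 0`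
the eigenvalues are therefore real and nonpositive, and the finitely many nonzero ones stay away
from `0`. For `k ≠ 0`, dividing by `|k| ≥ 1` gives the pencil `i N(ω) - t I₀` with `|ω| = 1` and
`t ∈ [0, 1]`. On this compact parameter set the ratio `φ⋆I₀φ / φ⋆Nφ` over normalized
eigenvectors attains its minimum, which is positive: a vanishing ratio forces `I₀ φ = 0`,
and then `φ` violates Condition (3).
-/

namespace Matrix

variable {n : Type*} [Fintype n]

lemma re_star_smul_dotProduct_mulVec_smul (A : Matrix n n ℂ) (c : ℂ) (x : n → ℂ) :
    (star (c • x) ⬝ᵥ A *ᵥ (c • x)).re = ‖c‖ ^ 2 * (star x ⬝ᵥ A *ᵥ x).re := by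
  rw [star_smul, mulVec_smul, dotProduct_smul, smul_dotProduct, smul_smul, smul_eq_mul,
    Complex.star_def, Complex.mul_conj', ← Complex.ofReal_pow, Complex.re_ofReal_mul]

lemma mulVec_eq_smul_mulVec_of_inv_mul [DecidableEq n] {K : Type*} [CommRing K]
    {N B : Matrix n n K} (hN : IsUnit N.det) {lam : K} {φ : n → K} (h : (N⁻¹ * B) *ᵥ φ = lam • φ) : B *ᵥ φ = lam • N *ᵥ φ := by
  have := congrArg (N *ᵥ ·) h
  simpa [mulVec_mulVec, ← Matrix.mul_assoc, mul_nonsing_inv _ hN, mulVec_smul] using this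

lemma finite_setOf_exists_mulVec_eq_smul {K : Type*} [Field K] [DecidableEq n]
    (A : Matrix n n K) : {lam : K | ∃ φ : n → K, φ ≠ 0 ∧ A *ᵥ φ = lam • φ}.Finite := by
  refine (Module.End.finite_hasEigenvalue (toLin' A)).subset ?_
  rintro lam ⟨φ, hφ, h⟩
  exact Module.End.hasEigenvalue_of_hasEigenvector
    ⟨Module.End.mem_eigenspace_iff.mpr (by rwa [toLin'_apply]), hφ⟩

lemma re_mul_re_eq_neg_re_and_im_mul_re_eq_re {S J N : Matrix n n ℂ} (hS : S.IsHermitian)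
    (hJ : J.IsHermitian) (hN : N.IsHermitian) {lam : ℂ} {φ : n → ℂ}
    (h : (Complex.I • S - J) *ᵥ φ = lam • N *ᵥ φ) :
    lam.re * (star φ ⬝ᵥ N *ᵥ φ).re = -(star φ ⬝ᵥ J *ᵥ φ).re ∧
      lam.im * (star φ ⬝ᵥ N *ᵥ φ).re = (star φ ⬝ᵥ S *ᵥ φ).re := by
  have hS' := hS.im_star_dotProduct_mulVec_self φ
  have hJ' := hJ.im_star_dotProduct_mulVec_self φ
  have hN' := hN.im_star_dotProduct_mulVec_self φ
  have hq : lam * (star φ ⬝ᵥ N *ᵥ φ) =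
      Complex.I * (star φ ⬝ᵥ S *ᵥ φ) - star φ ⬝ᵥ J *ᵥ φ := by
    simpa [sub_mulVec, smul_mulVec, dotProduct_sub, dotProduct_smul] using
      (congrArg (star φ ⬝ᵥ ·) h).symm
  simp only [RCLike.im_to_complex] at hS' hJ' hN'
  constructor
  · simpa [hS', hN'] using congrArg Complex.re hq
  · simpa [hJ', hN'] using congrArg Complex.im hq

lemma PosSemidef.re_dotProduct_pos_of_mulVec_ne_zero {J : Matrix n n ℂ} (hJ : J.PosSemidef)
    {ψ : n → ℂ} (h : J *ᵥ ψ ≠ 0) : 0 < (star ψ ⬝ᵥ J *ᵥ ψ).re :=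
  lt_of_le_of_ne (by simpa using hJ.re_dotProduct_nonneg ψ) fun h0 => h <|
    (hJ.dotProduct_mulVec_zero_iff ψ).mp <|
      Complex.ext h0.symm (by simpa using hJ.1.im_star_dotProduct_mulVec_self ψ)

theorem exists_pos_mul_re_le_re_of_isCompact {X : Type*} [TopologicalSpace X] {K : Set X}
    (hK : IsCompact K) {M : X → Matrix n n ℂ} (hM : Continuous M) {N J : Matrix n n ℂ}
    (hN : N.PosDef) (hJ : J.PosSemidef)
    (hKJ : ∀ x ∈ K, ∀ (μ : ℂ) (ψ : n → ℂ), J *ᵥ ψ = 0 → M x *ᵥ ψ = μ • N *ᵥ ψ → ψ = 0) :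
    ∃ δ > (0 : ℝ), ∀ x ∈ K, ∀ (μ : ℂ) (φ : n → ℂ), M x *ᵥ φ = μ • N *ᵥ φ →
      δ * (star φ ⬝ᵥ N *ᵥ φ).re ≤ (star φ ⬝ᵥ J *ᵥ φ).re := by
  -- Writing `μ = ψ⋆ (M x) ψ / ψ⋆ N ψ` as a product makes the set of normalized eigenpairs closed.
  let Y : Set (X × (n → ℂ)) := (K ×ˢ Metric.sphere 0 1) ∩
    {p | (star p.2 ⬝ᵥ N *ᵥ p.2) • M p.1 *ᵥ p.2 = (star p.2 ⬝ᵥ M p.1 *ᵥ p.2) • N *ᵥ p.2}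
  have hY : IsCompact Y := (hK.prod (isCompact_sphere 0 1)).inter_right
    (isClosed_eq (by fun_prop) (by fun_prop))
  have hNpos : ∀ ψ : n → ℂ, ψ ≠ 0 → 0 < (star ψ ⬝ᵥ N *ᵥ ψ).re := fun ψ hψ => by
    simpa using hN.re_dotProduct_pos hψ
  have hY0 : ∀ p ∈ Y, p.2 ≠ 0 := by
    rintro p ⟨⟨-, hp⟩, -⟩ h0
    simp [h0] at hp
  have hcont : ContinuousOn
      (fun p : X × (n → ℂ) => (star p.2 ⬝ᵥ J *ᵥ p.2).re / (star p.2 ⬝ᵥ N *ᵥ p.2).re) Y :=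
    (by fun_prop : Continuous fun p : X × (n → ℂ) => (star p.2 ⬝ᵥ J *ᵥ p.2).re).continuousOn.div
      (by fun_prop) fun p hp => (hNpos _ (hY0 p hp)).ne'
  have hpos : ∀ p ∈ Y, 0 < (star p.2 ⬝ᵥ J *ᵥ p.2).re / (star p.2 ⬝ᵥ N *ᵥ p.2).re := by
    rintro ⟨x, ψ⟩ hp
    have hψ := hY0 _ hp
    refine div_pos (hJ.re_dotProduct_pos_of_mulVec_ne_zero fun hJψ => hψ ?_) (hNpos ψ hψ)
    refine hKJ x hp.1.1 ((star ψ ⬝ᵥ M x *ᵥ ψ) / (star ψ ⬝ᵥ N *ᵥ ψ)) ψ hJψ ?_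
    have hN0 : star ψ ⬝ᵥ N *ᵥ ψ ≠ 0 := fun h => (hNpos ψ hψ).ne' (by simp [h])
    rw [div_eq_inv_mul, mul_smul, ← hp.2, smul_smul, inv_mul_cancel₀ hN0, one_smul]
  obtain ⟨δ, hδ, hδY⟩ := hY.exists_forall_le' hcont hpos
  refine ⟨δ, hδ, fun x hx μ φ h => ?_⟩
  rcases eq_or_ne φ 0 with rfl | hφ
  · simp
  set c : ℂ := ((‖φ‖⁻¹ : ℝ) : ℂ)
  have hc : ‖c‖ ≠ 0 := by simpa [c] using hφ
  have hψ : M x *ᵥ (c • φ) = μ • N *ᵥ (c • φ) := by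
    rw [mulVec_smul, h, mulVec_smul, smul_comm]
  have hmem : (x, c • φ) ∈ Y := by
    refine ⟨⟨hx, ?_⟩, ?_⟩
    · simp [c, norm_smul, hφ]
    · simp only [Set.mem_ofPred_eq, hψ, dotProduct_smul, smul_smul, smul_eq_mul, mul_comm]
  have := hδY _ hmem
  simp only [re_star_smul_dotProduct_mulVec_smul] at this
  rwa [mul_div_mul_left _ _ (by positivity), le_div_iff₀ (hNpos φ hφ)] at this

lemma im_eq_zero_and_re_neg_of_neg_mulVec_eq_smul {N J : Matrix n n ℂ} (hN : N.PosDef)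
    (hJ : J.PosSemidef) {lam : ℂ} {φ : n → ℂ} (hφ : φ ≠ 0) (h : -J *ᵥ φ = lam • N *ᵥ φ) :
    lam.im = 0 ∧ (lam ≠ 0 → lam.re < 0) := by
  have hNφ : 0 < (star φ ⬝ᵥ N *ᵥ φ).re := by simpa using hN.re_dotProduct_pos hφ
  have hJφ : 0 ≤ (star φ ⬝ᵥ J *ᵥ φ).re := by simpa using hJ.re_dotProduct_nonneg φ
  obtain ⟨hre, him⟩ := re_mul_re_eq_neg_re_and_im_mul_re_eq_re (S := 0) (isHermitian_zero) hJ.1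
    hN.1 (by rwa [smul_zero, zero_sub])
  have him0 : lam.im = 0 := by simpa [hNφ.ne'] using him
  refine ⟨him0, fun hlam => lt_of_le_of_ne ?_ fun hre0 => hlam (Complex.ext hre0 him0)⟩
  nlinarith

end Matrix

variable {n : ℕ}

noncomputable def symbolR (N1 N2 N3 : Matrix (Fin n) (Fin n) ℂ) (ω : EuclideanSpace ℝ (Fin 3)) :
    Matrix (Fin n) (Fin n) ℂ :=
  (ω 0 : ℂ) • N1 + (ω 1 : ℂ) • N2 + (ω 2 : ℂ) • N3

/-- `(ω, t)` stands for `(k / |k|, 1 / |k|)`: this is `i N(k) - I₀` divided by `|k|`. -/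
noncomputable def rescaledSymbol (N1 N2 N3 I0 : Matrix (Fin n) (Fin n) ℂ)
    (p : EuclideanSpace ℝ (Fin 3) × ℝ) : Matrix (Fin n) (Fin n) ℂ :=
  Complex.I • symbolR N1 N2 N3 p.1 - (p.2 : ℂ) • I0

lemma isHermitian_symbolZ {N1 N2 N3 : Matrix (Fin n) (Fin n) ℂ} (hN1 : N1.IsHermitian)
    (hN2 : N2.IsHermitian) (hN3 : N3.IsHermitian) (k : Fin 3 → ℤ) :
    (symbolZ N1 N2 N3 k).IsHermitian := by
  unfold symbolZ IsHermitian
  simp [conjTranspose_smul, hN1.eq, hN2.eq, hN3.eq]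

lemma symbolR_smul (N1 N2 N3 : Matrix (Fin n) (Fin n) ℂ) (c : ℝ) (ω : EuclideanSpace ℝ (Fin 3)) :
    symbolR N1 N2 N3 (c • ω) = (c : ℂ) • symbolR N1 N2 N3 ω := by
  simp only [symbolR, PiLp.smul_apply, smul_eq_mul, Complex.ofReal_mul, smul_add, smul_smul]

lemma symbolR_toLp_intCast (N1 N2 N3 : Matrix (Fin n) (Fin n) ℂ) (k : Fin 3 → ℤ) :
    symbolR N1 N2 N3 (WithLp.toLp 2 fun i => (k i : ℝ)) = symbolZ N1 N2 N3 k := by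
  simp [symbolR, symbolZ]

lemma one_le_norm_toLp_intCast {m : ℕ} {k : Fin m → ℤ} (hk : k ≠ 0) :
    1 ≤ ‖(WithLp.toLp 2 fun i => (k i : ℝ) : EuclideanSpace ℝ (Fin m))‖ := by
  obtain ⟨i, hi⟩ := Function.ne_iff.mp hk
  calc (1 : ℝ) ≤ |(k i : ℝ)| := by exact_mod_cast Int.one_le_abs hi
    _ ≤ _ := by simpa using PiLp.norm_apply_le (WithLp.toLp 2 fun i => (k i : ℝ)) i

lemma rescaledSymbol_inv_norm (N1 N2 N3 I0 : Matrix (Fin n) (Fin n) ℂ) (k : Fin 3 → ℤ) :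
    let kR : EuclideanSpace ℝ (Fin 3) := WithLp.toLp 2 fun i => (k i : ℝ)
    rescaledSymbol N1 N2 N3 I0 (‖kR‖⁻¹ • kR, ‖kR‖⁻¹) =
      ((‖kR‖⁻¹ : ℝ) : ℂ) • (Complex.I • symbolZ N1 N2 N3 k - I0) := by
  simp only [rescaledSymbol, symbolR_smul, symbolR_toLp_intCast, smul_sub, smul_comm _ Complex.I]

lemma continuous_rescaledSymbol (N1 N2 N3 I0 : Matrix (Fin n) (Fin n) ℂ) :
    Continuous (rescaledSymbol N1 N2 N3 I0) := by
  unfold rescaledSymbol symbolR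
  fun_prop

theorem exists_pos_re_le_neg_of_ne_zero {N N1 N2 N3 I0 : Matrix (Fin n) (Fin n) ℂ}
    (hN : N.PosDef) (hN1 : N1.IsHermitian) (hN2 : N2.IsHermitian) (hN3 : N3.IsHermitian)
    (hI0 : I0.PosSemidef)
    (hcond3 : ∀ (μ : ℂ) (nh : EuclideanSpace ℝ (Fin 3)), ‖nh‖ = 1 →
      ∀ ψ : Fin n → ℂ, I0 *ᵥ ψ = 0 → (μ • N + Complex.I • symbolR N1 N2 N3 nh) *ᵥ ψ = 0 →
        ψ = 0) :
    ∃ δ > (0 : ℝ), ∀ k : Fin 3 → ℤ, k ≠ 0 → ∀ (lam : ℂ) (φ : Fin n → ℂ), φ ≠ 0 →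
      (Complex.I • symbolZ N1 N2 N3 k - I0) *ᵥ φ = lam • N *ᵥ φ → lam.re ≤ -δ := by
  have hkernel : ∀ x ∈ Metric.sphere (0 : EuclideanSpace ℝ (Fin 3)) 1 ×ˢ Set.Icc (0 : ℝ) 1,
      ∀ (μ : ℂ) (ψ : Fin n → ℂ), I0 *ᵥ ψ = 0 →
        rescaledSymbol N1 N2 N3 I0 x *ᵥ ψ = μ • N *ᵥ ψ → ψ = 0 := by
    rintro ⟨ω, t⟩ ⟨hω, -⟩ μ ψ hψ h
    refine hcond3 (-μ) ω (by simpa using hω) ψ hψ ?_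
    simp only [rescaledSymbol, sub_mulVec, smul_mulVec, hψ, smul_zero, sub_zero] at h
    rw [add_mulVec, smul_mulVec, smul_mulVec, h, neg_smul, neg_add_cancel]
  obtain ⟨δ, hδ, hK⟩ := exists_pos_mul_re_le_re_of_isCompact
    ((isCompact_sphere (0 : EuclideanSpace ℝ (Fin 3)) 1).prod isCompact_Icc)
    (continuous_rescaledSymbol N1 N2 N3 I0) hN hI0 hkernel
  refine ⟨δ, hδ, fun k hk lam φ hφ h => ?_⟩
  set kR : EuclideanSpace ℝ (Fin 3) := WithLp.toLp 2 fun i => (k i : ℝ)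
  have hkR : 1 ≤ ‖kR‖ := one_le_norm_toLp_intCast hk
  have hmem : (‖kR‖⁻¹ • kR, ‖kR‖⁻¹) ∈ Metric.sphere (0 : EuclideanSpace ℝ (Fin 3)) 1 ×ˢ
      Set.Icc (0 : ℝ) 1 := by
    refine ⟨?_, by positivity, inv_le_one_of_one_le₀ hkR⟩
    simp [norm_smul, (zero_lt_one.trans_le hkR).ne']
  have hrescaled : rescaledSymbol N1 N2 N3 I0 (‖kR‖⁻¹ • kR, ‖kR‖⁻¹) *ᵥ φ =
      (((‖kR‖⁻¹ : ℝ) : ℂ) * lam) • N *ᵥ φ := by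
    rw [rescaledSymbol_inv_norm, smul_mulVec, h, smul_smul]
  have hdiss := hK _ hmem _ φ hrescaled
  have hre := (re_mul_re_eq_neg_re_and_im_mul_re_eq_re (isHermitian_symbolZ hN1 hN2 hN3 k)
    hI0.1 hN.1 h).1
  have hNφ : 0 < (star φ ⬝ᵥ N *ᵥ φ).re := by simpa using hN.re_dotProduct_pos hφ
  nlinarith

theorem relaxed_stability_eigenvalue_condition_general
    (n : ℕ)
    (N N1 N2 N3 I0 : Matrix (Fin n) (Fin n) ℂ)
    (hN : N.PosDef)
    (hN1 : N1.IsHermitian) (hN2 : N2.IsHermitian) (hN3 : N3.IsHermitian)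
    (hI0 : I0.PosSemidef)
    (hcond3 : ∀ (μ : ℂ) (nh : EuclideanSpace ℝ (Fin 3)), ‖nh‖ = 1 →
      ∀ ψ : Fin n → ℂ, I0 *ᵥ ψ = 0 →
        (μ • N + Complex.I • ((nh 0 : ℂ) • N1 + (nh 1 : ℂ) • N2 + (nh 2 : ℂ) • N3))
          *ᵥ ψ = 0 → ψ = 0)
    (A : (Fin 3 → ℤ) → Matrix (Fin n) (Fin n) ℂ)
    (hA : ∀ k, A k = N⁻¹ * (Complex.I • symbolZ N1 N2 N3 k - I0)) :
    ∃ δ > (0 : ℝ),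
      (∀ (k : Fin 3 → ℤ), k ≠ 0 → ∀ lam : ℂ,
        (∃ φ : Fin n → ℂ, φ ≠ 0 ∧ A k *ᵥ φ = lam • φ) → lam.re ≤ -δ) ∧
      (∀ lam : ℂ, (∃ φ : Fin n → ℂ, φ ≠ 0 ∧ A 0 *ᵥ φ = lam • φ) →
        lam = 0 ∨ (lam.im = 0 ∧ lam.re ≤ -δ)) := by
  have hpencil : ∀ k lam φ, A k *ᵥ φ = lam • φ →
      (Complex.I • symbolZ N1 N2 N3 k - I0) *ᵥ φ = lam • N *ᵥ φ := fun k lam φ h =>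
    mulVec_eq_smul_mulVec_of_inv_mul hN.det_pos.ne'.isUnit (hA k ▸ h)
  obtain ⟨δ₁, hδ₁, hfreq⟩ := exists_pos_re_le_neg_of_ne_zero hN hN1 hN2 hN3 hI0 hcond3
  have hzero : ∀ lam ∈ {lam : ℂ | ∃ φ, φ ≠ 0 ∧ A 0 *ᵥ φ = lam • φ},
      lam.im = 0 ∧ (lam ≠ 0 → lam.re < 0) := by
    rintro lam ⟨φ, hφ, h⟩
    refine im_eq_zero_and_re_neg_of_neg_mulVec_eq_smul hN hI0 hφ ?_
    simpa [symbolZ] using hpencil 0 lam φ h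
  obtain ⟨δ₀, hδ₀, hδ₀le⟩ := ((finite_setOf_exists_mulVec_eq_smul (A 0)).sdiff
    (t := {0})).isCompact.exists_forall_le' (f := fun lam : ℂ => -lam.re)
    Complex.continuous_re.neg.continuousOn
    fun lam hlam => neg_pos.mpr ((hzero lam hlam.1).2 hlam.2)
  refine ⟨min δ₀ δ₁, lt_min hδ₀ hδ₁, fun k hk lam ⟨φ, hφ, h⟩ => ?_, fun lam hlam => ?_⟩
  · exact (hfreq k hk lam φ hφ (hpencil k lam φ h)).trans (neg_le_neg (min_le_right _ _))
  · refine or_iff_not_imp_left.mpr fun h0 => ⟨(hzero lam hlam).1, ?_⟩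
    linarith [hδ₀le lam ⟨hlam, h0⟩, min_le_left δ₀ δ₁]

/-- The relaxed stability eigenvalue condition for the Fourier symbol
`A(k) = N⁻¹(i N(k) − I₀)`: under Condition (3) there is `δ > 0` such that all
eigenvalues at nonzero integer frequencies have real part `≤ −δ`, and every
eigenvalue of `A(0) = −N⁻¹I₀` is either `0` or real and `≤ −δ`. -/
theorem relaxed_stability_eigenvalue_condition
    (n : ℕ) (hn : 1 ≤ n)
    (N N1 N2 N3 I0 : Matrix (Fin n) (Fin n) ℂ)
    (hN : N.PosDef)
    (hN1 : N1.IsHermitian) (hN2 : N2.IsHermitian) (hN3 : N3.IsHermitian)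
    (hI0 : I0.PosSemidef)
    (hcond3 : ∀ (μ : ℂ) (nh : EuclideanSpace ℝ (Fin 3)), ‖nh‖ = 1 →
      ∀ ψ : Fin n → ℂ, I0 *ᵥ ψ = 0 →
        (μ • N + Complex.I • ((nh 0 : ℂ) • N1 + (nh 1 : ℂ) • N2 + (nh 2 : ℂ) • N3))
          *ᵥ ψ = 0 → ψ = 0)
    (A : (Fin 3 → ℤ) → Matrix (Fin n) (Fin n) ℂ)
    (hA : ∀ k, A k = N⁻¹ * (Complex.I • symbolZ N1 N2 N3 k - I0)) :
    ∃ δ > (0 : ℝ),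
      (∀ (k : Fin 3 → ℤ), k ≠ 0 → ∀ lam : ℂ,
        (∃ φ : Fin n → ℂ, φ ≠ 0 ∧ A k *ᵥ φ = lam • φ) → lam.re ≤ -δ) ∧
      (∀ lam : ℂ, (∃ φ : Fin n → ℂ, φ ≠ 0 ∧ A 0 *ᵥ φ = lam • φ) →
        lam = 0 ∨ (lam.im = 0 ∧ lam.re ≤ -δ)) :=
  relaxed_stability_eigenvalue_condition_general n N N1 N2 N3 I0 hN hN1 hN2 hN3 hI0 hcond3 A hA
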